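/- arXiv:1811.03249 — 2 statements merged into one kernel-verified Lean document; each statement's English description precedes it below -/
import Mathlib

section
/- Suppose $u \in L^1_{uloc}(\mathbb{R}^3)$ satisfies $\lim_{|x_0| \to \infty} \int_{Q_1(x_0)} |u - (u)_{Q_1(x_0)}|\,dx = 0$. Then for every $r > 0$ (including $r > 1$), $\lim_{|x_0| \to \infty} \int_{Q_r(x_0)} |u - (u)_{Q_r(x_0)}|\,dx = 0$. -/
/-!
Oscillation over a subcube is at most twice the oscillation over the cube, so decay passes to
smaller radii. To pass from `r` to `3r/2`, cover `Q_{3r/2}(x)` by the eight cubes `Q_r(x + c)` with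
`c ∈ {±r/2}³`. Each of them meets `Q_r(x)` in a cube of radius `r/4`, on which the two averages are
compared; this bounds the oscillation over `Q_{3r/2}(x)` by a fixed combination of oscillations over
translates of `Q_r`, which still decay at infinity. Iterating reaches every radius `(3/2)ⁿ`.
-/

open MeasureTheory Metric Filter
open scoped ENNReal

noncomputable section

/-- Open cube in `ℝ³` centered at `x` with side length `2r`. -/
def cube (x : EuclideanSpace ℝ (Fin 3)) (r : ℝ) : Set (EuclideanSpace ℝ (Fin 3)) :=
  {y | ∀ i, |y i - x i| < r}

section MeanOscillation

variable {α : Type*} [MeasurableSpace α] {μ : Measure α} {s t t' : Set α} {u : α → ℝ}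

/-- Not normalised by the measure of `s`. -/
def meanOsc (μ : Measure α) (u : α → ℝ) (s : Set α) : ℝ :=
  ∫ y in s, |u y - ⨍ z in s, u z ∂μ| ∂μ

lemma meanOsc_nonneg : 0 ≤ meanOsc μ u s :=
  integral_nonneg fun _ => abs_nonneg _

lemma integrableOn_abs_sub_const (hu : IntegrableOn u s μ) (hs : μ s ≠ ∞) (c : ℝ) :
    IntegrableOn (fun y => |u y - c|) s μ :=
  (hu.sub (integrableOn_const hs)).abs

lemma setIntegral_abs_sub_le_add (hu : IntegrableOn u s μ) (hs : μ s ≠ ∞) (c d : ℝ) :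
    ∫ y in s, |u y - c| ∂μ ≤ ∫ y in s, |u y - d| ∂μ + μ.real s * |d - c| := by
  have hd := integrableOn_abs_sub_const hu hs d
  calc ∫ y in s, |u y - c| ∂μ ≤ ∫ y in s, (|u y - d| + |d - c|) ∂μ :=
        integral_mono (integrableOn_abs_sub_const hu hs c) (hd.add (integrableOn_const hs))
          fun y => abs_sub_le _ _ _
    _ = _ := by rw [integral_add hd (integrableOn_const hs), setIntegral_const, smul_eq_mul]

lemma measureReal_mul_abs_sub_le (hu : IntegrableOn u s μ) (hs : μ s ≠ ∞) (c d : ℝ) :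
    μ.real s * |c - d| ≤ ∫ y in s, |u y - c| ∂μ + ∫ y in s, |u y - d| ∂μ := by
  have hc := integrableOn_abs_sub_const hu hs c
  have hd := integrableOn_abs_sub_const hu hs d
  calc μ.real s * |c - d| = ∫ _ in s, |c - d| ∂μ := by rw [setIntegral_const, smul_eq_mul]
    _ ≤ ∫ y in s, (|u y - c| + |u y - d|) ∂μ :=
        integral_mono (integrableOn_const hs) (hc.add hd) fun y =>
          (abs_sub_le c (u y) d).trans_eq (by rw [abs_sub_comm c])
    _ = _ := integral_add hc hd

lemma measureReal_mul_abs_setAverage_sub_le (hu : IntegrableOn u s μ) (hs : μ s ≠ ∞) (c : ℝ) :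
    μ.real s * |(⨍ z in s, u z ∂μ) - c| ≤ ∫ y in s, |u y - c| ∂μ := by
  have h : μ.real s * ((⨍ z in s, u z ∂μ) - c) = ∫ y in s, (u y - c) ∂μ := by
    rw [integral_sub hu (integrableOn_const hs), setIntegral_const, ← measure_smul_setAverage _ hs,
      smul_eq_mul, smul_eq_mul, mul_sub]
  rw [← abs_of_nonneg measureReal_nonneg, ← abs_mul, h]
  exact abs_integral_le_integral_abs

lemma meanOsc_le_two_mul_setIntegral_abs_sub (hu : IntegrableOn u s μ) (hs : μ s ≠ ∞) (c : ℝ) :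
    meanOsc μ u s ≤ 2 * ∫ y in s, |u y - c| ∂μ := by
  have := measureReal_mul_abs_setAverage_sub_le hu hs c
  have := setIntegral_abs_sub_le_add hu hs (⨍ z in s, u z ∂μ) c
  rw [abs_sub_comm] at this
  unfold meanOsc
  linarith

lemma setIntegral_abs_sub_le_of_subset (hu : IntegrableOn u s μ) (hs : μ s ≠ ∞) (hts : t ⊆ s)
    (c : ℝ) : ∫ y in t, |u y - c| ∂μ ≤ ∫ y in s, |u y - c| ∂μ :=
  setIntegral_mono_set (integrableOn_abs_sub_const hu hs c) (.of_forall fun _ => abs_nonneg _)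
    hts.eventuallyLE

lemma meanOsc_le_two_mul_of_subset (hu : IntegrableOn u s μ) (hs : μ s ≠ ∞) (hts : t ⊆ s) :
    meanOsc μ u t ≤ 2 * meanOsc μ u s :=
  calc meanOsc μ u t ≤ 2 * ∫ y in t, |u y - ⨍ z in s, u z ∂μ| ∂μ :=
        meanOsc_le_two_mul_setIntegral_abs_sub (hu.mono_set hts) (measure_ne_top_of_subset hts hs) _
    _ ≤ 2 * meanOsc μ u s := by
        gcongr; exact setIntegral_abs_sub_le_of_subset hu hs hts _

lemma setIntegral_abs_sub_setAverage_le_of_common_subset (hu : IntegrableOn u (s ∪ t') μ)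
    (hs : μ s ≠ ∞) (ht' : μ t' ≠ ∞) (hts : t ⊆ s) (htt' : t ⊆ t') (ht : 0 < μ.real t) :
    ∫ y in s, |u y - ⨍ z in t', u z ∂μ| ∂μ ≤
      meanOsc μ u s + μ.real s / μ.real t * (meanOsc μ u s + meanOsc μ u t') := by
  set a := ⨍ z in s, u z ∂μ
  set a' := ⨍ z in t', u z ∂μ
  have hus : IntegrableOn u s μ := hu.mono_set Set.subset_union_left
  have hut' : IntegrableOn u t' μ := hu.mono_set Set.subset_union_right
  have hdiff : μ.real t * |a - a'| ≤ meanOsc μ u s + meanOsc μ u t' := by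
    have := measureReal_mul_abs_sub_le (hus.mono_set hts) (measure_ne_top_of_subset hts hs) a a'
    have := setIntegral_abs_sub_le_of_subset hus hs hts a
    have := setIntegral_abs_sub_le_of_subset hut' ht' htt' a'
    unfold meanOsc; linarith
  calc ∫ y in s, |u y - a'| ∂μ ≤ meanOsc μ u s + μ.real s * |a - a'| :=
        setIntegral_abs_sub_le_add hus hs a' a
    _ ≤ meanOsc μ u s + μ.real s / μ.real t * (meanOsc μ u s + meanOsc μ u t') := by
        rw [div_mul_eq_mul_div, mul_div_assoc]
        gcongr
        rwa [le_div_iff₀ ht, mul_comm]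

lemma setIntegral_le_sum_of_subset_iUnion {ι : Type*} [Fintype ι] {s : ι → Set α} {f : α → ℝ}
    (hf : 0 ≤ f) (hfs : ∀ i, IntegrableOn f (s i) μ) (ht : t ⊆ ⋃ i, s i) :
    ∫ y in t, f y ∂μ ≤ ∑ i, ∫ y in s i, f y ∂μ := by
  have hsum : Integrable f (∑ i, μ.restrict (s i)) :=
    integrable_finsetSum_measure.2 fun i _ => hfs i
  calc ∫ y in t, f y ∂μ ≤ ∫ y, f y ∂(∑ i, μ.restrict (s i)) := by
        refine integral_mono_measure ?_ (.of_forall hf) hsum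
        rw [← Measure.sum_fintype]
        exact (Measure.restrict_mono ht le_rfl).trans Measure.restrict_iUnion_le
    _ = ∑ i, ∫ y in s i, f y ∂μ := integral_finsetSum_measure fun i _ => hfs i

end MeanOscillation

lemma Filter.Tendsto.comp_add_right_cocompact {G β : Type*} [TopologicalSpace G] [AddGroup G]
    [ContinuousAdd G] {f : G → β} {l : Filter β} (h : Tendsto f (cocompact G) l) (v : G) :
    Tendsto (fun x => f (x + v)) (cocompact G) l :=
  h.comp (Homeomorph.addRight v).map_cocompact.le

local notation "ℝ³" => EuclideanSpace ℝ (Fin 3)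

section Cube

variable (x : ℝ³) (r : ℝ)

lemma cube_eq_preimage_pi :
    cube x r = WithLp.ofLp ⁻¹' Set.univ.pi fun i => Set.Ioo (x i - r) (x i + r) := by
  ext y
  simp only [cube, Set.mem_ofPred_eq, Set.mem_preimage, Set.mem_univ_pi, Set.mem_Ioo, abs_lt]
  refine forall_congr' fun i => ?_
  constructor <;> rintro ⟨h₁, h₂⟩ <;> constructor <;> linarith

lemma volume_cube : volume (cube x r) = ENNReal.ofReal (2 * r) ^ 3 := by
  rw [cube_eq_preimage_pi, (PiLp.volume_preserving_ofLp (Fin 3)).measure_preimage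
    (MeasurableSet.univ_pi fun _ => measurableSet_Ioo).nullMeasurableSet, Real.volume_pi_Ioo]
  simp [two_mul, add_sub_sub_cancel]

lemma volume_cube_ne_top : volume (cube x r) ≠ ∞ := by
  rw [volume_cube]; exact ENNReal.pow_ne_top ENNReal.ofReal_ne_top

lemma volume_real_cube {r : ℝ} (hr : 0 ≤ r) : volume.real (cube x r) = (2 * r) ^ 3 := by
  rw [measureReal_def, volume_cube, ENNReal.toReal_pow, ENNReal.toReal_ofReal (by positivity)]

lemma integrableOn_cube {u : ℝ³ → ℝ} (hu : LocallyIntegrable u volume) :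
    IntegrableOn u (cube x r) volume := by
  have hK : IsCompact (WithLp.ofLp ⁻¹' Set.univ.pi fun i => Set.Icc (x i - r) (x i + r) : Set ℝ³) :=
    (PiLp.homeomorph 2 _).isCompact_preimage.2 (isCompact_univ_pi fun _ => isCompact_Icc)
  refine (hu.integrableOn_isCompact hK).mono_set ?_
  rw [cube_eq_preimage_pi]
  exact Set.preimage_mono (Set.pi_mono fun _ _ => Set.Ioo_subset_Icc_self)

lemma cube_mono {r r' : ℝ} (h : r ≤ r') : cube x r ⊆ cube x r' :=
  fun _ hy i => (hy i).trans_le h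

end Cube

def cornerShift (b : Fin 3 → Bool) (s : ℝ) : ℝ³ :=
  WithLp.toLp 2 fun i => if b i then s else -s

lemma add_cornerShift_apply (x : ℝ³) (b : Fin 3 → Bool) (s : ℝ) (i : Fin 3) :
    (x + cornerShift b s) i = x i + if b i then s else -s := rfl

@[simp]
lemma cornerShift_zero (b : Fin 3 → Bool) : cornerShift b 0 = 0 := by
  ext i; simp [cornerShift]

lemma cube_subset_iUnion_cube_corner (x : ℝ³) {r : ℝ} (hr : 0 < r) :
    cube x (3 / 2 * r) ⊆ ⋃ b, cube (x + cornerShift b (r / 2)) r := by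
  intro y hy
  refine Set.mem_iUnion.2 ⟨fun i => decide (x i ≤ y i), fun i => ?_⟩
  have hyi := abs_lt.1 (hy i)
  rw [add_cornerShift_apply, abs_lt]
  by_cases h : x i ≤ y i
  · simp only [h, decide_true, if_true]; constructor <;> linarith
  · simp only [h, decide_false, Bool.false_eq_true, if_false]; constructor <;> linarith

lemma cube_corner_quarter_subset (x : ℝ³) (b : Fin 3 → Bool) {r s : ℝ} (hs : 0 ≤ s)
    (hsr : s ≤ r / 2) :
    cube (x + cornerShift b (r / 4)) (r / 4) ⊆ cube (x + cornerShift b s) r := by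
  intro y hy i
  have hyi := abs_lt.1 (hy i)
  rw [add_cornerShift_apply] at hyi ⊢
  rw [abs_lt]
  split_ifs at hyi ⊢ <;> constructor <;> linarith

lemma meanOsc_cube_three_halves_le {u : ℝ³ → ℝ} (hu : LocallyIntegrable u volume) (x : ℝ³)
    {r : ℝ} (hr : 0 < r) :
    meanOsc volume u (cube x (3 / 2 * r)) ≤
      2 * ∑ b, (65 * meanOsc volume u (cube (x + cornerShift b (r / 2)) r) +
        64 * meanOsc volume u (cube x r)) := by
  set a := ⨍ z in cube x r, u z
  have hu' (y : ℝ³) (ρ : ℝ) : IntegrableOn u (cube y ρ) volume := integrableOn_cube y ρ hu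
  have hcorner : ∀ b, ∫ y in cube (x + cornerShift b (r / 2)) r, |u y - a| ≤
      65 * meanOsc volume u (cube (x + cornerShift b (r / 2)) r) +
        64 * meanOsc volume u (cube x r) := by
    intro b
    have hcenter : cube (x + cornerShift b (r / 4)) (r / 4) ⊆ cube x r := by
      simpa using cube_corner_quarter_subset x b le_rfl (by linarith : 0 ≤ r / 2)
    have := setIntegral_abs_sub_setAverage_le_of_common_subset
      ((hu' _ _).union (hu' _ _))
      (volume_cube_ne_top _ _) (volume_cube_ne_top _ _)
      (cube_corner_quarter_subset x b (by linarith) le_rfl) hcenter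
      (by rw [volume_real_cube _ (by linarith)]; positivity)
    rw [volume_real_cube _ hr.le, volume_real_cube _ (by linarith),
      show (2 * r) ^ 3 / (2 * (r / 4)) ^ 3 = 64 by field_simp; norm_num] at this
    linarith
  calc meanOsc volume u (cube x (3 / 2 * r))
      ≤ 2 * ∫ y in cube x (3 / 2 * r), |u y - a| :=
        meanOsc_le_two_mul_setIntegral_abs_sub (hu' _ _) (volume_cube_ne_top _ _) a
    _ ≤ 2 * ∑ b, ∫ y in cube (x + cornerShift b (r / 2)) r, |u y - a| := by
        gcongr
        exact setIntegral_le_sum_of_subset_iUnion (fun _ => abs_nonneg _)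
          (fun _ => integrableOn_abs_sub_const (hu' _ _) (volume_cube_ne_top _ _) a)
          (cube_subset_iUnion_cube_corner x hr)
    _ ≤ _ := by gcongr with b; exact hcorner b

def OscillationDecays (u : ℝ³ → ℝ) (r : ℝ) : Prop :=
  Tendsto (fun x => meanOsc volume u (cube x r)) (cocompact ℝ³) (nhds 0)

namespace OscillationDecays

variable {u : ℝ³ → ℝ} {r : ℝ}

lemma of_le (hu : LocallyIntegrable u volume) (h : OscillationDecays u r) {r' : ℝ} (hr' : r' ≤ r) :
    OscillationDecays u r' :=
  squeeze_zero (fun _ => meanOsc_nonneg)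
    (fun x => meanOsc_le_two_mul_of_subset (integrableOn_cube x r hu) (volume_cube_ne_top x r)
      (cube_mono x hr'))
    (by simpa using h.const_mul 2)

lemma three_halves_mul (hu : LocallyIntegrable u volume) (h : OscillationDecays u r) (hr : 0 < r) :
    OscillationDecays u (3 / 2 * r) := by
  refine squeeze_zero (fun _ => meanOsc_nonneg) (fun x => meanOsc_cube_three_halves_le hu x hr) ?_
  have hsum := tendsto_finsetSum Finset.univ fun b _ =>
    ((h.comp_add_right_cocompact (cornerShift b (r / 2))).const_mul 65).add (h.const_mul 64)
  simpa using hsum.const_mul 2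

end OscillationDecays

theorem oscillation_decay_all_cubes_general
    (u : EuclideanSpace ℝ (Fin 3) → ℝ) (hu : LocallyIntegrable u volume)
    (hosc : Tendsto (fun x0 : EuclideanSpace ℝ (Fin 3) =>
        ∫ y in cube x0 1, |u y - ⨍ z in cube x0 1, u z|)
      (cocompact (EuclideanSpace ℝ (Fin 3))) (nhds 0))
    (r : ℝ) :
    Tendsto (fun x0 : EuclideanSpace ℝ (Fin 3) =>
        ∫ y in cube x0 r, |u y - ⨍ z in cube x0 r, u z|)
      (cocompact (EuclideanSpace ℝ (Fin 3))) (nhds 0) := by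
  have hpow (n : ℕ) : OscillationDecays u ((3 / 2) ^ n) := by
    induction n with
    | zero => rw [pow_zero]; exact hosc
    | succ n ih => rw [pow_succ']; exact ih.three_halves_mul hu (by positivity)
  obtain ⟨n, hn⟩ := pow_unbounded_of_one_lt r (by norm_num : (1 : ℝ) < 3 / 2)
  exact (hpow n).of_le hu hn.le

/-- If `u ∈ L¹_uloc(ℝ³)` has decaying mean oscillation over unit cubes, then its
mean oscillation over cubes of any radius `r > 0` (including `r > 1`) also decays at spatial infinity. -/
theorem oscillation_decay_all_cubes
    (u : EuclideanSpace ℝ (Fin 3) → ℝ) (hu : LocallyIntegrable u volume)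
    (huloc : ∃ M : ℝ, ∀ z : EuclideanSpace ℝ (Fin 3), ∫ y in ball z 1, |u y| ≤ M)
    (hosc : Tendsto (fun x0 : EuclideanSpace ℝ (Fin 3) =>
        ∫ y in cube x0 1, |u y - ⨍ z in cube x0 1, u z|)
      (cocompact (EuclideanSpace ℝ (Fin 3))) (nhds 0))
    (r : ℝ) (hr0 : 0 < r) :
    Tendsto (fun x0 : EuclideanSpace ℝ (Fin 3) =>
        ∫ y in cube x0 r, |u y - ⨍ z in cube x0 r, u z|)
      (cocompact (EuclideanSpace ℝ (Fin 3))) (nhds 0) :=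
  oscillation_decay_all_cubes_general u hu hosc r
end
end

section
/- Fix $1 \le s < \infty$ and $1 \le p \le \infty$, times $0 \le t_0 < t$, and a sequence of points $x_k \in \mathbb{R}^3$ such that the balls $B_1(x_k)$ are pairwise disjoint. Let $t_k = t_0 + 2^{-k}$ and define $u(x,\tau) = 2^{k/s}$ for $(x,\tau) \in B_1(x_k) \times (t_0, t_k)$ and $u = 0$ otherwise. Then $u \in U^{s,p}(t_0,t)$ (i.e., $\sup_{x_0}\|u\|_{L^s(t_0,t;L^p(B_1(x_0)))} < \infty$), but $\int_{t_0}^{t_1} \|u(\cdot,\tau)\|_{L^p_{uloc}}^s\,d\tau = \infty$, so $u \notin L^s(t_0,t; L^p_{uloc})$. -/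
/-!
On `(t₀, t₀ + 2⁻ᵏ)` the plateau on `B₁(x_k)` alone gives `sup_{x₀} ‖u(τ)‖_{L^p(B₁(x₀))}^s ≥
2^k |B₁|^{s/p}`, so each dyadic annulus `(t₀ + 2^{-(n+2)}, t₀ + 2^{-(n+1)})` contributes the same
positive amount to the time integral, which therefore diverges.

For a fixed ball `B₁(x₀)` only the balls `B₁(x_k)` meeting it matter; they are disjoint and lie in
`B₃(x₀)`, so there are at most `|B₃| / |B₁|` of them. On `B₁(x₀)` we have
`|u(τ)|^s ≤ ∑_k 2^k 1_{(t₀, t₀ + 2⁻ᵏ)}(τ)` over these `k`, and each term has time integral `1`.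
-/

open MeasureTheory Metric ENNReal

section LpNorm

variable {α ε : Type*} [MeasurableSpace α] {μ : Measure α} {p : ℝ≥0∞} {S : Set α}

lemma eLpNorm_restrict_of_eqOn_const [TopologicalSpace ε] [ESeminormedAddMonoid ε] {f : α → ε}
    {c : ε} (hS : MeasurableSet S) (hμS : μ S ≠ 0) (hp : p ≠ 0) (hf : Set.EqOn f (fun _ => c) S) :
    eLpNorm f p (μ.restrict S) = ‖c‖ₑ * μ S ^ p.toReal⁻¹ := by
  rw [eLpNorm_congr_ae ((ae_restrict_iff' hS).2 (ae_of_all _ hf)),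
    eLpNorm_const c hp (by rwa [Ne, Measure.restrict_eq_zero]), Measure.restrict_apply_univ,
    one_div]

lemma eLpNorm_restrict_rpow_le [TopologicalSpace ε] [ESeminormedAddMonoid ε] {f : α → ε}
    {s : ℝ} {C : ℝ≥0∞} (hS : MeasurableSet S) (hs : 0 < s) (hf : ∀ y ∈ S, ‖f y‖ₑ ^ s ≤ C) :
    eLpNorm f p (μ.restrict S) ^ s ≤ C * (μ S ^ p.toReal⁻¹) ^ s := by
  have hbound : ∀ᵐ y ∂μ.restrict S, ‖f y‖ₑ ≤ C ^ s⁻¹ :=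
    ae_restrict_of_forall_mem hS fun y hy => (ENNReal.le_rpow_inv_iff hs).2 (hf y hy)
  calc eLpNorm f p (μ.restrict S) ^ s ≤ (C ^ s⁻¹ * μ S ^ p.toReal⁻¹) ^ s := by
        gcongr
        simpa only [Measure.restrict_apply_univ, smul_eq_mul] using
          eLpNorm_le_of_ae_enorm_bound hbound
    _ = C * (μ S ^ p.toReal⁻¹) ^ s := by
        rw [ENNReal.mul_rpow_of_nonneg _ _ hs.le, ENNReal.rpow_inv_rpow hs.ne']

end LpNorm

lemma lintegral_eq_top_of_pairwise_disjoint {α : Type*} [MeasurableSpace α] {μ : Measure α}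
    {f : α → ℝ≥0∞} {S : Set α} {J : ℕ → Set α} {ε : ℝ≥0∞} (hJ : ∀ n, MeasurableSet (J n))
    (hJd : Pairwise (Function.onFun Disjoint J)) (hJS : ∀ n, J n ⊆ S) (hε : ε ≠ 0)
    (hf : ∀ n, ε ≤ ∫⁻ x in J n, f x ∂μ) :
    ∫⁻ x in S, f x ∂μ = ⊤ := by
  refine eq_top_iff.2 ?_
  calc ⊤ = ∑' _ : ℕ, ε := (ENNReal.tsum_const_eq_top_of_ne_zero hε).symm
    _ ≤ ∑' n, ∫⁻ x in J n, f x ∂μ := ENNReal.tsum_le_tsum hf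
    _ = ∫⁻ x in ⋃ n, J n, f x ∂μ := (lintegral_iUnion hJ hJd f).symm
    _ ≤ ∫⁻ x in S, f x ∂μ := lintegral_mono_set (Set.iUnion_subset hJS)

lemma encard_not_disjoint_ball_mul_le {E ι : Type*} [NormedAddCommGroup E] [MeasurableSpace E]
    [BorelSpace E] (μ : Measure E) [μ.IsAddHaarMeasure] [Countable ι] {x : ι → E} {r : ℝ}
    (hdisj : Pairwise (Function.onFun Disjoint fun k => ball (x k) r)) (x0 : E) :
    {k | ¬Disjoint (ball (x k) r) (ball x0 r)}.encard * μ (ball 0 r) ≤ μ (ball 0 (3 * r)) := by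
  set T := {k | ¬Disjoint (ball (x k) r) (ball x0 r)}
  have hsub : ∀ k : T, ball (x k) r ⊆ ball x0 (3 * r) := by
    rintro ⟨k, hk⟩ y hy
    obtain ⟨z, hzk, hz0⟩ := Set.not_disjoint_iff.1 hk
    rw [mem_ball] at *
    linarith [dist_triangle4 y (x k) z x0, dist_comm z (x k)]
  calc T.encard * μ (ball 0 r) = ∑' k : T, μ (ball (x k) r) := by
        simp only [Measure.addHaar_ball_center, ENNReal.tsum_set_const]
    _ = μ (⋃ k : T, ball (x k) r) :=
        (measure_iUnion (fun k l hkl => hdisj (Subtype.coe_injective.ne hkl) :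
          Pairwise (Function.onFun Disjoint fun k : T => ball (x k) r))
          fun _ => measurableSet_ball).symm
    _ ≤ μ (ball x0 (3 * r)) := measure_mono (Set.iUnion_subset hsub)
    _ = μ (ball 0 (3 * r)) := Measure.addHaar_ball_center μ x0 _

lemma ofReal_inv_two_pow (k : ℕ) : ENNReal.ofReal ((2 ^ k)⁻¹) = (2 ^ k)⁻¹ := by
  rw [ENNReal.ofReal_inv_of_pos (by positivity), ENNReal.ofReal_pow zero_le_two,
    ENNReal.ofReal_ofNat]

def dyadicInterval (t0 : ℝ) (k : ℕ) : Set ℝ := Set.Ioo t0 (t0 + 2 ^ (-(k : ℝ)))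

section Dyadic

variable {t0 : ℝ} {k : ℕ}

lemma dyadicInterval_eq : dyadicInterval t0 k = Set.Ioo t0 (t0 + (2 ^ k)⁻¹) := by
  rw [dyadicInterval, Real.rpow_neg zero_le_two, Real.rpow_natCast]

lemma measurableSet_dyadicInterval : MeasurableSet (dyadicInterval t0 k) := measurableSet_Ioo

lemma volume_dyadicInterval : volume (dyadicInterval t0 k) = (2 ^ k)⁻¹ := by
  rw [dyadicInterval_eq, Real.volume_Ioo, add_sub_cancel_left, ofReal_inv_two_pow]

lemma lintegral_tsum_indicator_dyadicInterval (T : Set ℕ) :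
    ∫⁻ τ, ∑' k : T, (dyadicInterval t0 k).indicator (fun _ => 2 ^ (k : ℕ)) τ = T.encard := by
  rw [lintegral_tsum fun k =>
    (measurable_const.indicator measurableSet_dyadicInterval).aemeasurable]
  simp_rw [lintegral_indicator_const measurableSet_dyadicInterval, volume_dyadicInterval,
    ENNReal.mul_inv_cancel (pow_ne_zero _ two_ne_zero) (pow_ne_top ofNat_ne_top)]
  exact ENNReal.tsum_set_one T

lemma setLIntegral_Ioo_eq_top_of_dyadic_le {f : ℝ → ℝ≥0∞} {c : ℝ≥0∞} (hc : c ≠ 0)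
    (hf : ∀ k : ℕ, 1 ≤ k → ∀ τ ∈ dyadicInterval t0 k, c * 2 ^ k ≤ f τ) :
    ∫⁻ τ in Set.Ioo t0 (t0 + 2⁻¹), f τ = ⊤ := by
  set a : ℕ → ℝ := fun n => t0 + (2 ^ (n + 1))⁻¹
  have ha : Antitone a := fun m n hmn => by
    simp only [a]
    gcongr
    norm_num
  refine lintegral_eq_top_of_pairwise_disjoint (J := fun n => Set.Ioo (a (n + 1)) (a n))
    (ε := c * 2⁻¹) (fun _ => measurableSet_Ioo) ha.pairwise_disjoint_on_Ioo_succ ?_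
    (mul_ne_zero hc (by simp)) fun n => ?_
  · rintro n τ ⟨hτ1, hτ2⟩
    have : a n ≤ t0 + 2⁻¹ := by simpa [a] using ha (Nat.zero_le n)
    exact ⟨lt_of_le_of_lt (le_add_of_nonneg_right (by positivity)) hτ1, hτ2.trans_le this⟩
  have hJ : Set.Ioo (a (n + 1)) (a n) ⊆ dyadicInterval t0 (n + 1) := by
    rw [dyadicInterval_eq]
    exact Set.Ioo_subset_Ioo (le_add_of_nonneg_right (by positivity)) le_rfl
  have hvol : volume (Set.Ioo (a (n + 1)) (a n)) = (2 ^ (n + 2))⁻¹ := by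
    rw [Real.volume_Ioo, ← ofReal_inv_two_pow]
    congr 1
    simp only [a]
    ring
  calc c * 2⁻¹ = c * 2 ^ (n + 1) * volume (Set.Ioo (a (n + 1)) (a n)) := by
        rw [hvol, pow_succ 2 (n + 1), ENNReal.mul_inv (by simp) (by simp), ← mul_assoc,
          mul_assoc c, ENNReal.mul_inv_cancel (by simp) (by simp), mul_one]
    _ = ∫⁻ _ in Set.Ioo (a (n + 1)) (a n), c * 2 ^ (n + 1) := (setLIntegral_const _ _).symm
    _ ≤ ∫⁻ τ in Set.Ioo (a (n + 1)) (a n), f τ :=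
        setLIntegral_mono' measurableSet_Ioo fun τ hτ => hf (n + 1) le_add_self τ (hJ hτ)

end Dyadic

lemma enorm_two_rpow_div_rpow {s : ℝ} (hs : s ≠ 0) (k : ℕ) :
    ‖(2 : ℝ) ^ ((k : ℝ) / s)‖ₑ ^ s = 2 ^ k := by
  rw [Real.enorm_eq_ofReal (by positivity), ← ENNReal.ofReal_rpow_of_pos two_pos,
    ENNReal.ofReal_ofNat, ← ENNReal.rpow_mul, div_mul_cancel₀ _ hs, ENNReal.rpow_natCast]

section Counterexample

variable {E : Type*} {s t0 : ℝ} {x : ℕ → E} {u : ℝ → E → ℝ}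

lemma enorm_rpow_le_tsum_indicator_dyadicInterval [PseudoMetricSpace E] (hs : 0 < s)
    (hu1 : ∀ k : ℕ, 1 ≤ k → ∀ y ∈ ball (x k) 1, ∀ τ ∈ dyadicInterval t0 k,
      u τ y = 2 ^ ((k : ℝ) / s))
    (hu0 : ∀ τ y, (¬ ∃ k : ℕ, 1 ≤ k ∧ y ∈ ball (x k) 1 ∧ τ ∈ dyadicInterval t0 k) → u τ y = 0)
    {x0 y : E} (hy : y ∈ ball x0 1) (τ : ℝ) :
    ‖u τ y‖ₑ ^ s ≤ ∑' k : {k | ¬Disjoint (ball (x k) 1) (ball x0 1)},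
      (dyadicInterval t0 k).indicator (fun _ => 2 ^ (k : ℕ)) τ := by
  by_cases h : ∃ k : ℕ, 1 ≤ k ∧ y ∈ ball (x k) 1 ∧ τ ∈ dyadicInterval t0 k
  · obtain ⟨k, hk, hyk, hτ⟩ := h
    rw [hu1 k hk y hyk τ hτ, enorm_two_rpow_div_rpow hs.ne',
      ← Set.indicator_of_mem hτ (fun _ => (2 : ℝ≥0∞) ^ k)]
    exact ENNReal.le_tsum (f := fun k : {k | ¬Disjoint (ball (x k) 1) (ball x0 1)} =>
      (dyadicInterval t0 k).indicator (fun _ => 2 ^ (k : ℕ)) τ)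
      ⟨k, Set.not_disjoint_iff.2 ⟨y, hyk, hy⟩⟩
  · rw [hu0 τ y h, enorm_zero, ENNReal.zero_rpow_of_pos hs]
    positivity

variable [NormedAddCommGroup E] [MeasurableSpace E] [BorelSpace E] {μ : Measure E}
  [μ.IsAddHaarMeasure] {p : ℝ≥0∞}

lemma two_pow_mul_le_iSup_eLpNorm_rpow (hs : 0 < s) (hp : p ≠ 0)
    (hu1 : ∀ k : ℕ, 1 ≤ k → ∀ y ∈ ball (x k) 1, ∀ τ ∈ dyadicInterval t0 k,
      u τ y = 2 ^ ((k : ℝ) / s))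
    {k : ℕ} (hk : 1 ≤ k) {τ : ℝ} (hτ : τ ∈ dyadicInterval t0 k) :
    (μ (ball 0 1) ^ p.toReal⁻¹) ^ s * 2 ^ k ≤
      (⨆ x0, eLpNorm (u τ) p (μ.restrict (ball x0 1))) ^ s := by
  have hball := eLpNorm_restrict_of_eqOn_const measurableSet_ball
    (measure_ball_pos μ (x k) one_pos).ne' hp fun y hy => hu1 k hk y hy τ hτ
  calc (μ (ball 0 1) ^ p.toReal⁻¹) ^ s * 2 ^ k
      = eLpNorm (u τ) p (μ.restrict (ball (x k) 1)) ^ s := by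
        rw [hball, Measure.addHaar_ball_center μ (x k), ENNReal.mul_rpow_of_nonneg _ _ hs.le,
          enorm_two_rpow_div_rpow hs.ne', mul_comm]
    _ ≤ _ := ENNReal.rpow_le_rpow
        (le_iSup (fun x0 => eLpNorm (u τ) p (μ.restrict (ball x0 1))) (x k)) hs.le

lemma lintegral_eLpNorm_rpow_le [ProperSpace E] (hs : 0 < s)
    (hdisj : Pairwise fun k l => Disjoint (ball (x k) 1) (ball (x l) 1))
    (hu1 : ∀ k : ℕ, 1 ≤ k → ∀ y ∈ ball (x k) 1, ∀ τ ∈ dyadicInterval t0 k,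
      u τ y = 2 ^ ((k : ℝ) / s))
    (hu0 : ∀ τ y, (¬ ∃ k : ℕ, 1 ≤ k ∧ y ∈ ball (x k) 1 ∧ τ ∈ dyadicInterval t0 k) → u τ y = 0)
    (x0 : E) :
    ∫⁻ τ, eLpNorm (u τ) p (μ.restrict (ball x0 1)) ^ s ≤
      μ (ball 0 3) / μ (ball 0 1) * (μ (ball 0 1) ^ p.toReal⁻¹) ^ s := by
  set T := {k | ¬Disjoint (ball (x k) 1) (ball x0 1)}
  have hT : T.encard ≤ μ (ball 0 3) / μ (ball 0 1) := by
    rw [ENNReal.le_div_iff_mul_le (Or.inl (measure_ball_pos μ 0 one_pos).ne')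
      (Or.inl measure_ball_lt_top.ne)]
    simpa only [mul_one] using encard_not_disjoint_ball_mul_le μ hdisj x0
  calc ∫⁻ τ, eLpNorm (u τ) p (μ.restrict (ball x0 1)) ^ s
      ≤ ∫⁻ τ, (∑' k : T, (dyadicInterval t0 k).indicator (fun _ => 2 ^ (k : ℕ)) τ) *
          (μ (ball 0 1) ^ p.toReal⁻¹) ^ s := lintegral_mono fun τ => by
        rw [← Measure.addHaar_ball_center μ x0]
        exact eLpNorm_restrict_rpow_le measurableSet_ball hs fun y hy =>
          enorm_rpow_le_tsum_indicator_dyadicInterval hs hu1 hu0 hy τ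
    _ = T.encard * (μ (ball 0 1) ^ p.toReal⁻¹) ^ s := by
        rw [lintegral_mul_const _ (Measurable.tsum fun k =>
          measurable_const.indicator measurableSet_dyadicInterval),
          lintegral_tsum_indicator_dyadicInterval]
    _ ≤ μ (ball 0 3) / μ (ball 0 1) * (μ (ball 0 1) ^ p.toReal⁻¹) ^ s := by gcongr

end Counterexample

theorem Usp_ne_Ls_Lp_uloc_general
    (s : ℝ) (hs : 1 ≤ s) (p : ℝ≥0∞) (hp : 1 ≤ p)
    (t0 t : ℝ)
    (x : ℕ → EuclideanSpace ℝ (Fin 3))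
    (hdisj : Pairwise fun k l => Disjoint (ball (x k) 1) (ball (x l) 1))
    (u : ℝ → EuclideanSpace ℝ (Fin 3) → ℝ)
    (hu1 : ∀ k : ℕ, 1 ≤ k → ∀ y ∈ ball (x k) 1,
      ∀ τ ∈ Set.Ioo t0 (t0 + 2 ^ (-(k : ℝ))), u τ y = 2 ^ ((k : ℝ) / s))
    (hu0 : ∀ (τ : ℝ) (y : EuclideanSpace ℝ (Fin 3)),
      (¬ ∃ k : ℕ, 1 ≤ k ∧ y ∈ ball (x k) 1 ∧ τ ∈ Set.Ioo t0 (t0 + 2 ^ (-(k : ℝ)))) →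
      u τ y = 0) :
    ((∫⁻ τ in Set.Ioo t0 (t0 + 2⁻¹),
        (⨆ x0 : EuclideanSpace ℝ (Fin 3),
          eLpNorm (u τ) p (volume.restrict (ball x0 1))) ^ s) = ⊤) ∧
    ∃ C : ℝ≥0∞, C ≠ ⊤ ∧ ∀ x0 : EuclideanSpace ℝ (Fin 3),
      (∫⁻ τ in Set.Ioo t0 t,
        (eLpNorm (u τ) p (volume.restrict (ball x0 1))) ^ s) ^ (1 / s) ≤ C := by
  have hs0 : 0 < s := zero_lt_one.trans_le hs
  have hp0 : p ≠ 0 := (zero_lt_one.trans_le hp).ne'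
  set V : ℝ → ℝ≥0∞ := fun r => volume (ball (0 : EuclideanSpace ℝ (Fin 3)) r)
  have hV1 : V 1 ≠ 0 := (measure_ball_pos _ _ one_pos).ne'
  have hV : ∀ r, V r ≠ ⊤ := fun _ => measure_ball_lt_top.ne
  have hK : V 1 ^ p.toReal⁻¹ ≠ ⊤ := ENNReal.rpow_ne_top_of_nonneg (by positivity) (hV 1)
  refine ⟨setLIntegral_Ioo_eq_top_of_dyadic_le ?_ fun k hk τ hτ =>
      two_pow_mul_le_iSup_eLpNorm_rpow hs0 hp0 hu1 hk hτ,
    (V 3 / V 1 * (V 1 ^ p.toReal⁻¹) ^ s) ^ (1 / s), ?_, fun x0 => ?_⟩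
  · exact (ENNReal.rpow_pos (ENNReal.rpow_pos (pos_iff_ne_zero.2 hV1) (hV 1)) hK).ne'
  · exact ENNReal.rpow_ne_top_of_nonneg (by positivity) (ENNReal.mul_ne_top
      (ENNReal.div_ne_top (hV 3) hV1) (ENNReal.rpow_ne_top_of_nonneg hs0.le hK))
  · gcongr
    exact (setLIntegral_le_lintegral _ _).trans (lintegral_eLpNorm_rpow_le hs0 hdisj hu1 hu0 x0)

/-- A function `u` which equals `2^{k/s}` on `B₁(x_k) × (t₀, t₀ + 2⁻ᵏ)` (for a sequence of
disjoint unit balls) and `0` elsewhere lies in `U^{s,p}(t₀,t)` but not in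
`Lˢ(t₀,t;L^p_uloc)`: the inclusion `Lˢ(t₀,t;L^p_uloc) ⊂ U^{s,p}(t₀,t)` is strict. -/
theorem Usp_ne_Ls_Lp_uloc
    (s : ℝ) (hs : 1 ≤ s) (p : ℝ≥0∞) (hp : 1 ≤ p)
    (t0 t : ℝ) (ht0 : 0 ≤ t0) (ht : t0 < t)
    (x : ℕ → EuclideanSpace ℝ (Fin 3))
    (hdisj : Pairwise fun k l => Disjoint (ball (x k) 1) (ball (x l) 1))
    (u : ℝ → EuclideanSpace ℝ (Fin 3) → ℝ)
    (hu1 : ∀ k : ℕ, 1 ≤ k → ∀ y ∈ ball (x k) 1,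
      ∀ τ ∈ Set.Ioo t0 (t0 + 2 ^ (-(k : ℝ))), u τ y = 2 ^ ((k : ℝ) / s))
    (hu0 : ∀ (τ : ℝ) (y : EuclideanSpace ℝ (Fin 3)),
      (¬ ∃ k : ℕ, 1 ≤ k ∧ y ∈ ball (x k) 1 ∧ τ ∈ Set.Ioo t0 (t0 + 2 ^ (-(k : ℝ)))) →
      u τ y = 0) :
    ((∫⁻ τ in Set.Ioo t0 (t0 + 2⁻¹),
        (⨆ x0 : EuclideanSpace ℝ (Fin 3),
          eLpNorm (u τ) p (volume.restrict (ball x0 1))) ^ s) = ⊤) ∧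
    ∃ C : ℝ≥0∞, C ≠ ⊤ ∧ ∀ x0 : EuclideanSpace ℝ (Fin 3),
      (∫⁻ τ in Set.Ioo t0 t,
        (eLpNorm (u τ) p (volume.restrict (ball x0 1))) ^ s) ^ (1 / s) ≤ C :=
  Usp_ne_Ls_Lp_uloc_general s hs p hp t0 t x hdisj u hu1 hu0
end
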